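/- A Borel subset B of the Baire space ω^ω belongs to the tree ideal m₀ if and only if B does not contain the body [T] of any Miller tree T. -/

import Mathlib

open Cardinal Set MeasureTheory

/-- A tree on ω: a nonempty set of finite sequences closed under initial segments. -/
def IsTree (T : Set (List ℕ)) : Prop :=
  T.Nonempty ∧ ∀ s ∈ T, ∀ n : ℕ, s.take n ∈ T

/-- The body of a tree: all infinite branches. -/
def treeBody (T : Set (List ℕ)) : Set (ℕ → ℕ) :=
  {x | ∀ n : ℕ, (List.ofFn fun i : Fin n => x i) ∈ T}

/-- Immediate successors of a node in a tree. -/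
def succs (T : Set (List ℕ)) (t : List ℕ) : Set ℕ := {n | t ++ [n] ∈ T}

/-- Sacks (perfect) tree: every node has an extension with at least two immediate successors. -/
def IsSacksTree (T : Set (List ℕ)) : Prop :=
  IsTree T ∧ ∀ s ∈ T, ∃ t ∈ T, s <+: t ∧ (succs T t).Nontrivial

/-- Miller tree: every node has an extension with infinitely many immediate successors. -/
def IsMillerTree (T : Set (List ℕ)) : Prop :=
  IsTree T ∧ ∀ s ∈ T, ∃ t ∈ T, s <+: t ∧ (succs T t).Infinite

/-- Laver tree: has a stem (a node comparable with every node) such that every node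
extending the stem has infinitely many immediate successors. -/
def IsLaverTree (T : Set (List ℕ)) : Prop :=
  IsTree T ∧ ∃ s ∈ T, (∀ t ∈ T, s <+: t ∨ t <+: s) ∧
    ∀ t ∈ T, s <+: t → (succs T t).Infinite

/-- Complete Laver tree: every node has infinitely many immediate successors. -/
def IsCompleteLaverTree (T : Set (List ℕ)) : Prop :=
  IsTree T ∧ ∀ t ∈ T, (succs T t).Infinite

/-- The tree ideal t₀ associated with a family of trees 𝕋. -/
def treeIdeal (𝕋 : Set (Set (List ℕ))) : Set (Set (ℕ → ℕ)) :=
  {A | ∀ P ∈ 𝕋, ∃ Q ∈ 𝕋, Q ⊆ P ∧ treeBody Q ∩ A = ∅}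

/-- t-measurability with respect to a family of trees 𝕋. -/
def TMeasurable (𝕋 : Set (Set (List ℕ))) (A : Set (ℕ → ℕ)) : Prop :=
  ∀ P ∈ 𝕋, ∃ Q ∈ 𝕋, Q ⊆ P ∧ (treeBody Q ⊆ A ∨ treeBody Q ∩ A = ∅)

/-- 𝕋-Bernstein set: meets and omits the body of every tree in 𝕋. -/
def TBernstein (𝕋 : Set (Set (List ℕ))) (B : Set (ℕ → ℕ)) : Prop :=
  ∀ T ∈ 𝕋, (B ∩ treeBody T).Nonempty ∧ (B \ treeBody T).Nonempty


/-!
Call `B` Miller-measurable if every Miller tree has a Miller subtree whose body lies inside `B`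
or is disjoint from `B`. These sets form a σ-algebra containing the basic clopen sets, hence every
Borel set is Miller-measurable, and for such `B` the theorem is immediate (bodies of Miller trees are
nonempty). The substance is closure under countable unions: if no Miller subtree of `P` has its body
inside some `Aₘ`, a fusion argument builds a Miller subtree of `P` level by level, thinning the tree
above the `m`-th splitting level so that its body avoids `Aₘ`; the resulting tree avoids `⋃ Aₘ`.
-/

def initSeg (x : ℕ → ℕ) (n : ℕ) : List ℕ := List.ofFn fun i : Fin n => x i

def listCylinder (s : List ℕ) : Set (ℕ → ℕ) := {x | initSeg x s.length = s}

section InitSeg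

variable {x : ℕ → ℕ} {s ρ : List ℕ} {m n : ℕ}

@[simp] lemma length_initSeg (x : ℕ → ℕ) (n : ℕ) : (initSeg x n).length = n := by
  simp [initSeg]

lemma initSeg_succ (x : ℕ → ℕ) (n : ℕ) : initSeg x (n + 1) = initSeg x n ++ [x n] := by
  rw [initSeg, initSeg, List.ofFn_succ', List.concat_eq_append]
  rfl

lemma initSeg_prefix_initSeg (x : ℕ → ℕ) (h : m ≤ n) : initSeg x m <+: initSeg x n := by
  induction n, h using Nat.le_induction with
  | base => exact List.prefix_refl _
  | succ n _ ih => exact ih.trans (initSeg_succ x n ▸ List.prefix_append _ _)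

lemma prefix_initSeg_iff (h : s.length ≤ n) : s <+: initSeg x n ↔ x ∈ listCylinder s := by
  refine ⟨fun hs => ?_, fun hx => hx ▸ initSeg_prefix_initSeg x h⟩
  exact (List.prefix_of_prefix_length_le (initSeg_prefix_initSeg x h) hs (by simp)).eq_of_length
    (by simp)

lemma mem_listCylinder_of_prefix (hs : s <+: ρ) (hx : initSeg x n <+: ρ) (hn : s.length ≤ n) :
    x ∈ listCylinder s :=
  (prefix_initSeg_iff hn).1 (List.prefix_of_prefix_length_le hs hx (by simpa using hn))

lemma cylinder_eq_listCylinder (x : ℕ → ℕ) (n : ℕ) :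
    PiNat.cylinder x n = listCylinder (initSeg x n) := by
  ext y
  change (∀ i < n, y i = x i) ↔ initSeg y (initSeg x n).length = initSeg x n
  rw [length_initSeg, initSeg, initSeg, List.ofFn_inj, funext_iff, Fin.forall_iff]

end InitSeg

lemma mem_treeBody_iff {T : Set (List ℕ)} {x : ℕ → ℕ} : x ∈ treeBody T ↔ ∀ n, initSeg x n ∈ T :=
  Iff.rfl

lemma treeBody_mono {S T : Set (List ℕ)} (h : S ⊆ T) : treeBody S ⊆ treeBody T :=
  fun _ hx n => h (hx n)

lemma treeBody_nonempty_of_forall_append_singleton_mem {T : Set (List ℕ)} (h₀ : [] ∈ T)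
    (h : ∀ s ∈ T, ∃ k, s ++ [k] ∈ T) : (treeBody T).Nonempty := by
  choose! next hnext using h
  let branch : ℕ → List ℕ := fun n => Nat.rec [] (fun _ s => s ++ [next s]) n
  have hbranch : ∀ n, initSeg (fun i => next (branch i)) n = branch n ∧ branch n ∈ T := by
    intro n
    induction n with
    | zero => exact ⟨by simp [initSeg, branch], h₀⟩
    | succ n ih => exact ⟨by rw [initSeg_succ, ih.1], hnext _ ih.2⟩
  exact ⟨fun i => next (branch i), mem_treeBody_iff.2 fun n => (hbranch n).1 ▸ (hbranch n).2⟩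

namespace IsTree

variable {T : Set (List ℕ)} (hT : IsTree T) {s t : List ℕ}
include hT

lemma mem_of_prefix (hst : s <+: t) (ht : t ∈ T) : s ∈ T := by
  rw [List.prefix_iff_eq_take.1 hst]
  exact hT.2 t ht _

lemma nil_mem : [] ∈ T :=
  let ⟨_, hs⟩ := hT.1
  hT.mem_of_prefix (List.nil_prefix) hs

end IsTree

def subtreeAt (T : Set (List ℕ)) (s : List ℕ) : Set (List ℕ) := {t ∈ T | t <+: s ∨ s <+: t}

lemma subtreeAt_subset (T : Set (List ℕ)) (s : List ℕ) : subtreeAt T s ⊆ T := fun _ h => h.1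

lemma prefix_of_mem_subtreeAt {T : Set (List ℕ)} {s t : List ℕ} (ht : t ∈ subtreeAt T s)
    (hl : s.length ≤ t.length) : s <+: t :=
  ht.2.elim (fun h => (h.eq_of_length (le_antisymm h.length_le hl)) ▸ List.prefix_refl t) id

lemma treeBody_subtreeAt_subset (T : Set (List ℕ)) (s : List ℕ) :
    treeBody (subtreeAt T s) ⊆ listCylinder s :=
  fun _ hx => (prefix_initSeg_iff le_rfl).1 (prefix_of_mem_subtreeAt (hx s.length) (by simp))

namespace IsMillerTree

variable {T : Set (List ℕ)} (hT : IsMillerTree T) {s : List ℕ}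
include hT

lemma exists_append_singleton_mem (hs : s ∈ T) : ∃ k, s ++ [k] ∈ T := by
  obtain ⟨t, ht, hst, hinf⟩ := hT.2 s hs
  obtain ⟨k, hk⟩ := hinf.nonempty
  have hlt : s.length < (t ++ [k]).length := by simpa using Nat.lt_succ_of_le hst.length_le
  refine ⟨(t ++ [k])[s.length], ?_⟩
  have hs' : s = (t ++ [k]).take s.length :=
    List.prefix_iff_eq_take.1 (hst.trans (List.prefix_append _ _))
  have : s ++ [(t ++ [k])[s.length]] = (t ++ [k]).take (s.length + 1) := by
    rw [List.take_add_one, List.getElem?_eq_getElem hlt, ← hs']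
    rfl
  exact this ▸ hT.1.2 _ hk _

lemma treeBody_nonempty : (treeBody T).Nonempty :=
  treeBody_nonempty_of_forall_append_singleton_mem hT.1.nil_mem
    fun _ => hT.exists_append_singleton_mem

lemma subtreeAt (hs : s ∈ T) : IsMillerTree (subtreeAt T s) := by
  refine ⟨⟨⟨s, hs, Or.inl (List.prefix_refl s)⟩, fun t ⟨ht, hts⟩ n => ⟨hT.1.2 t ht n, ?_⟩⟩, ?_⟩
  · rcases hts with h | h
    · exact Or.inl ((t.take_prefix n).trans h)
    · exact List.prefix_or_prefix_of_prefix (t.take_prefix n) h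
  · rintro t ⟨ht, hts⟩
    obtain ⟨w, hw, htw, hsw⟩ : ∃ w ∈ T, t <+: w ∧ s <+: w :=
      hts.elim (fun h => ⟨s, hs, h, List.prefix_refl s⟩) (fun h => ⟨t, ht, List.prefix_refl t, h⟩)
    obtain ⟨u, hu, hwu, hinf⟩ := hT.2 w hw
    have hsu : s <+: u := hsw.trans hwu
    refine ⟨u, ⟨hu, Or.inr hsu⟩, htw.trans hwu, hinf.mono fun k hk => ?_⟩
    exact ⟨hk, Or.inr (hsu.trans (List.prefix_append _ _))⟩

end IsMillerTree

lemma List.eq_or_exists_cons_suffix {α : Type*} {σ τ : List α} (h : σ <:+ τ) :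
    σ = τ ∨ ∃ b, b :: σ <:+ τ := by
  obtain ⟨l, rfl⟩ := h
  rcases l.eq_nil_or_concat with rfl | ⟨l, b, rfl⟩
  · exact Or.inl rfl
  · exact Or.inr ⟨b, l, by simp⟩

/-- Nodes are indexed by reversed finite sequences: `c :: σ` is the `c`-th child of `σ`. -/
structure MillerScheme where
  node : List ℕ → List ℕ
  split : List ℕ → List ℕ
  succ : List ℕ → ℕ → ℕ
  node_prefix_split (σ : List ℕ) : node σ <+: split σ
  node_cons (c : ℕ) (σ : List ℕ) : node (c :: σ) = split σ ++ [succ σ c]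
  succ_injective (σ : List ℕ) : (succ σ).Injective

namespace MillerScheme

variable (S : MillerScheme) {σ τ ρ : List ℕ} {x : ℕ → ℕ}

def tree : Set (List ℕ) := {s | ∃ σ, s <+: S.node σ}

lemma node_prefix_node_cons (c : ℕ) (σ : List ℕ) : S.node σ <+: S.node (c :: σ) :=
  S.node_cons c σ ▸ (S.node_prefix_split σ).trans (List.prefix_append _ _)

lemma length_node_cons (c : ℕ) (σ : List ℕ) :
    (S.node (c :: σ)).length = (S.split σ).length + 1 := by
  simp [S.node_cons]

lemma node_prefix_node_of_suffix (h : σ <:+ τ) : S.node σ <+: S.node τ := by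
  obtain ⟨l, rfl⟩ := h
  induction l with
  | nil => exact List.prefix_refl _
  | cons c l ih => exact ih.trans (S.node_prefix_node_cons c _)

lemma length_node_lt_of_suffix_of_ne (h : σ <:+ τ) (hne : σ ≠ τ) :
    (S.node σ).length < (S.node τ).length := by
  obtain rfl | ⟨c, hc⟩ := List.eq_or_exists_cons_suffix h
  · exact absurd rfl hne
  · calc (S.node σ).length ≤ (S.split σ).length := (S.node_prefix_split σ).length_le
      _ < (S.node (c :: σ)).length := by rw [length_node_cons]; omega
      _ ≤ (S.node τ).length := (S.node_prefix_node_of_suffix hc).length_le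

lemma eq_of_node_cons_prefix {a b : ℕ} (ha : S.node (a :: σ) <+: ρ) (hb : S.node (b :: σ) <+: ρ) :
    a = b := by
  have h := (List.prefix_of_prefix_length_le ha hb (by simp [length_node_cons])).eq_of_length
    (by simp [length_node_cons])
  rw [S.node_cons, S.node_cons] at h
  exact S.succ_injective σ (by simpa using h)

lemma suffix_or_suffix_of_node_prefix (hσ : S.node σ <+: ρ) (hτ : S.node τ <+: ρ) :
    σ <:+ τ ∨ τ <:+ σ := by
  induction σ with
  | nil => exact Or.inl List.nil_suffix
  | cons a σ ih =>
    rcases ih ((S.node_prefix_node_cons a σ).trans hσ) with h | h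
    · obtain rfl | ⟨b, hb⟩ := List.eq_or_exists_cons_suffix h
      · exact Or.inr (List.suffix_cons a σ)
      · obtain rfl := S.eq_of_node_cons_prefix hσ ((S.node_prefix_node_of_suffix hb).trans hτ)
        exact Or.inl hb
    · exact Or.inr (h.trans (List.suffix_cons a σ))

lemma suffix_of_node_prefix_node (h : S.node σ <+: S.node τ) : σ <:+ τ := by
  rcases S.suffix_or_suffix_of_node_prefix h (List.prefix_refl _) with h' | h'
  · exact h'
  · obtain rfl | hne := eq_or_ne τ σ
    · exact List.suffix_refl τ
    · exact absurd h.length_le (S.length_node_lt_of_suffix_of_ne h' hne).not_ge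

lemma node_mem_tree (σ : List ℕ) : S.node σ ∈ S.tree := ⟨σ, List.prefix_refl _⟩

lemma isMillerTree_tree : IsMillerTree S.tree := by
  refine ⟨⟨⟨_, S.node_mem_tree []⟩, fun s ⟨σ, hs⟩ n => ⟨σ, (s.take_prefix n).trans hs⟩⟩, ?_⟩
  rintro s ⟨σ, hs⟩
  refine ⟨S.split σ, ⟨0 :: σ, S.node_cons 0 σ ▸ List.prefix_append _ _⟩,
    hs.trans (S.node_prefix_split σ), ?_⟩
  refine infinite_of_injective_forall_mem (S.succ_injective σ) fun c => ?_
  show S.split σ ++ [S.succ σ c] ∈ S.tree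
  exact S.node_cons c σ ▸ S.node_mem_tree (c :: σ)

variable {S}

lemma suffix_of_mem_listCylinder (hx : x ∈ treeBody S.tree) (hσ : x ∈ listCylinder (S.node σ))
    {n : ℕ} (hn : (S.node σ).length ≤ n) : ∃ τ, σ <:+ τ ∧ initSeg x n <+: S.node τ := by
  obtain ⟨τ, hτ⟩ := hx n
  exact ⟨τ, S.suffix_of_node_prefix_node (((prefix_initSeg_iff hn).2 hσ).trans hτ), hτ⟩

lemma exists_mem_listCylinder_node (hx : x ∈ treeBody S.tree) (m : ℕ) :
    ∃ σ, σ.length = m ∧ x ∈ listCylinder (S.node σ) := by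
  induction m with
  | zero =>
    obtain ⟨τ, hτ⟩ := hx (S.node []).length
    exact ⟨[], rfl, mem_listCylinder_of_prefix
      (S.node_prefix_node_of_suffix List.nil_suffix) hτ le_rfl⟩
  | succ m ih =>
    obtain ⟨σ, rfl, hσ⟩ := ih
    have hsplit := (S.node_prefix_split σ).length_le
    obtain ⟨τ, hστ, hτ⟩ :=
      S.suffix_of_mem_listCylinder hx hσ (n := (S.split σ).length + 1) (by omega)
    obtain rfl | ⟨c, hc⟩ := List.eq_or_exists_cons_suffix hστ
    · exact absurd hτ.length_le (by simp only [length_initSeg]; omega)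
    · exact ⟨c :: σ, rfl, mem_listCylinder_of_prefix (S.node_prefix_node_of_suffix hc) hτ
        (S.length_node_cons c σ).le⟩

lemma mem_treeBody_of_mem_listCylinder {R : List ℕ → Set (List ℕ)} (hR : ∀ σ, IsTree (R σ))
    (hnode : ∀ σ, S.node σ ∈ R σ) (hanti : ∀ c σ, R (c :: σ) ⊆ R σ)
    (hx : x ∈ treeBody S.tree) (hσ : x ∈ listCylinder (S.node σ)) : x ∈ treeBody (R σ) := by
  have hanti' : ∀ {σ τ}, σ <:+ τ → R τ ⊆ R σ := by
    rintro σ _ ⟨l, rfl⟩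
    induction l with
    | nil => exact subset_rfl
    | cons c l ih => exact (hanti c _).trans ih
  intro n
  obtain ⟨τ, hστ, hτ⟩ := S.suffix_of_mem_listCylinder hx hσ (le_max_right n _)
  exact (hR σ).mem_of_prefix ((initSeg_prefix_initSeg x (le_max_left _ _)).trans hτ)
    (hanti' hστ (hnode τ))

end MillerScheme

def millerBelow (P : Set (List ℕ)) : Set (Set (List ℕ)) := {T | IsMillerTree T ∧ T ⊆ P}

lemma exists_splitting_node_of_mem_treeIdeal {P R : Set (List ℕ)} {A : Set (ℕ → ℕ)} {t : List ℕ}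
    (hA : A ∈ treeIdeal (millerBelow P)) (hR : R ∈ millerBelow P) (ht : t ∈ R) :
    ∃ Z ∈ millerBelow P, Z ⊆ R ∧ treeBody Z ∩ A = ∅ ∧
      ∃ u, t <+: u ∧ (succs Z u).Infinite := by
  -- thinning to `subtreeAt R t` first makes every long enough node of `Z` extend `t`
  obtain ⟨Z, ⟨hZ, hZP⟩, hZR, hZA⟩ :=
    hA (subtreeAt R t) ⟨hR.1.subtreeAt ht, (subtreeAt_subset R t).trans hR.2⟩
  obtain ⟨x, hx⟩ := hZ.treeBody_nonempty
  obtain ⟨u, hu, hxu, hinf⟩ := hZ.2 _ (hx t.length)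
  refine ⟨Z, ⟨hZ, hZP⟩, hZR.trans (subtreeAt_subset R t), hZA, u,
    prefix_of_mem_subtreeAt (hZR hu) ?_, hinf⟩
  simpa using hxu.length_le

/-- The fusion argument: `m₀` restricted to a Miller tree is a σ-ideal. -/
theorem IsMillerTree.exists_mem_millerBelow_inter_iUnion_eq_empty {P : Set (List ℕ)}
    (hP : IsMillerTree P) {A : ℕ → Set (ℕ → ℕ)} (hA : ∀ m, A m ∈ treeIdeal (millerBelow P)) :
    ∃ Q ∈ millerBelow P, treeBody Q ∩ ⋃ m, A m = ∅ := by
  let State := {p : List ℕ × Set (List ℕ) // p.2 ∈ millerBelow P ∧ p.1 ∈ p.2}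
  choose Z hZ hZR hZA u htu hinf using fun m (p : State) =>
    exists_splitting_node_of_mem_treeIdeal (hA m) p.2.1 p.2.2
  let succ (m : ℕ) (p : State) (c : ℕ) : ℕ := (hinf m p).natEmbedding _ c
  let child (m : ℕ) (p : State) (c : ℕ) : State :=
    ⟨(u m p ++ [succ m p c], Z m p), hZ m p, ((hinf m p).natEmbedding _ c).2⟩
  obtain ⟨state, hstate⟩ : ∃ state : List ℕ → State,
      ∀ c σ, state (c :: σ) = child σ.length (state σ) c :=
    ⟨fun σ => σ.rec ⟨([], P), ⟨hP, subset_rfl⟩, hP.1.nil_mem⟩ fun c σ p => child σ.length p c,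
      fun _ _ => rfl⟩
  let S : MillerScheme :=
    { node σ := (state σ).1.1
      split σ := u σ.length (state σ)
      succ σ := succ σ.length (state σ)
      node_prefix_split σ := htu _ _
      node_cons c σ := by rw [hstate]
      succ_injective σ _ _ h := (hinf _ _).natEmbedding _ |>.injective (Subtype.ext h) }
  have hR : ∀ c σ, (state (c :: σ)).1.2 = Z σ.length (state σ) := fun c σ => by rw [hstate]
  refine ⟨S.tree, ⟨S.isMillerTree_tree, fun s ⟨σ, hs⟩ => ?_⟩, ?_⟩
  · exact hP.1.mem_of_prefix hs ((state σ).2.1.2 (state σ).2.2)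
  -- a branch `x` of `S.tree` runs through some node `c :: σ` of level `m + 1`; the tree attached
  -- to that node was chosen to avoid `A m`
  rw [eq_empty_iff_forall_notMem]
  rintro x ⟨hx, hxA⟩
  obtain ⟨m, hxm⟩ := mem_iUnion.1 hxA
  obtain ⟨σ, hσm, hσ⟩ := S.exists_mem_listCylinder_node hx (m + 1)
  obtain ⟨c, σ, rfl⟩ := List.exists_cons_of_length_eq_add_one hσm
  have hxR := S.mem_treeBody_of_mem_listCylinder (R := fun σ => (state σ).1.2)
    (fun σ => (state σ).2.1.1.1) (fun σ => (state σ).2.2)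
    (fun c σ => (hR c σ).trans_subset (hZR _ _)) hx hσ
  simp only [hR] at hxR
  simp only [List.length_cons, add_left_inj] at hσm
  exact (eq_empty_iff_forall_notMem.1 (hZA _ _)) x ⟨hxR, hσm ▸ hxm⟩

lemma tMeasurable_empty (𝕋 : Set (Set (List ℕ))) : TMeasurable 𝕋 ∅ :=
  fun P hP => ⟨P, hP, subset_rfl, Or.inr (inter_empty _)⟩

lemma TMeasurable.compl {𝕋 : Set (Set (List ℕ))} {A : Set (ℕ → ℕ)} (h : TMeasurable 𝕋 A) :
    TMeasurable 𝕋 Aᶜ := by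
  intro P hP
  obtain ⟨Q, hQ, hQP, hQA⟩ := h P hP
  refine ⟨Q, hQ, hQP, hQA.symm.imp (fun h => ?_) (fun h => ?_)⟩
  · exact subset_compl_iff_disjoint_right.2 (disjoint_iff_inter_eq_empty.2 h)
  · rw [← disjoint_iff_inter_eq_empty, ← subset_compl_iff_disjoint_right, compl_compl]
    exact h

lemma TMeasurable.iUnion_miller {A : ℕ → Set (ℕ → ℕ)}
    (h : ∀ m, TMeasurable {T | IsMillerTree T} (A m)) :
    TMeasurable {T | IsMillerTree T} (⋃ m, A m) := by
  intro P hP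
  by_cases hsub : ∃ m, ∃ Q ∈ millerBelow P, treeBody Q ⊆ A m
  · obtain ⟨m, Q, ⟨hQ, hQP⟩, hQA⟩ := hsub
    exact ⟨Q, hQ, hQP, Or.inl (hQA.trans (subset_iUnion A m))⟩
  push Not at hsub
  have hA : ∀ m, A m ∈ treeIdeal (millerBelow P) := by
    rintro m R ⟨hR, hRP⟩
    obtain ⟨Q, hQ, hQR, hQA | hQA⟩ := h m R hR
    · exact absurd hQA (hsub m Q ⟨hQ, hQR.trans hRP⟩)
    · exact ⟨Q, ⟨hQ, hQR.trans hRP⟩, hQR, hQA⟩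
  obtain ⟨Q, ⟨hQ, hQP⟩, hQA⟩ := hP.exists_mem_millerBelow_inter_iUnion_eq_empty hA
  exact ⟨Q, hQ, hQP, Or.inr hQA⟩

lemma tMeasurable_miller_listCylinder (s : List ℕ) :
    TMeasurable {T | IsMillerTree T} (listCylinder s) := by
  intro P hP
  by_cases hs : s ∈ P
  · exact ⟨subtreeAt P s, hP.subtreeAt hs, subtreeAt_subset P s,
      Or.inl (treeBody_subtreeAt_subset P s)⟩
  · refine ⟨P, hP, subset_rfl, Or.inr (eq_empty_iff_forall_notMem.2 fun x ⟨hx, hxs⟩ => hs ?_)⟩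
    exact hxs ▸ hx s.length

lemma MeasurableSet.tMeasurable_miller {B : Set (ℕ → ℕ)} (hB : MeasurableSet[borel (ℕ → ℕ)] B) :
    TMeasurable {T | IsMillerTree T} B := by
  let M : MeasurableSpace (ℕ → ℕ) :=
    { MeasurableSet' := TMeasurable {T | IsMillerTree T}
      measurableSet_empty := tMeasurable_empty _
      measurableSet_compl _ := TMeasurable.compl
      measurableSet_iUnion _ := TMeasurable.iUnion_miller }
  suffices borel (ℕ → ℕ) ≤ M from this B hB
  rw [(PiNat.isTopologicalBasis_cylinders fun _ => ℕ).borel_eq_generateFrom]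
  refine MeasurableSpace.generateFrom_le ?_
  rintro _ ⟨x, n, rfl⟩
  rw [cylinder_eq_listCylinder]
  exact tMeasurable_miller_listCylinder _

/-- a Borel set belongs to m₀ iff it contains the body of no Miller tree. -/
theorem stmt7 (B : Set (ℕ → ℕ)) (hB : MeasurableSet[borel (ℕ → ℕ)] B) :
    B ∈ treeIdeal {T | IsMillerTree T} ↔ ¬ ∃ T, IsMillerTree T ∧ treeBody T ⊆ B := by
  constructor
  · rintro hIdeal ⟨T, hT, hTB⟩
    obtain ⟨Q, hQ, hQT, hQB⟩ := hIdeal T hT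
    obtain ⟨x, hx⟩ := IsMillerTree.treeBody_nonempty hQ
    exact (eq_empty_iff_forall_notMem.1 hQB) x ⟨hx, hTB (treeBody_mono hQT hx)⟩
  · intro hno P hP
    obtain ⟨Q, hQ, hQP, hQB | hQB⟩ := hB.tMeasurable_miller P hP
    · exact absurd ⟨Q, hQ, hQB⟩ hno
    · exact ⟨Q, hQ, hQP, hQB⟩
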